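/- For every z in the complex plane, the integral over ℂ of log|z−ζ|² against the measure (1/π)(1+|ζ|²)^{-2} dA(ζ) equals log(1+|z|²); that is, (1/π)∫_ℂ log|z−ζ|²/(1+|ζ|²)² dA(ζ) = log(1+|z|²). -/

import Mathlib

/-!
In polar coordinates `ζ = r e^{iθ}` the weight `(1 + ‖ζ‖²)⁻²` is constant on circles, so the
integral becomes `2π ∫₀^∞ 2r (1 + r²)⁻² · A(r) dr`, where `A(r)` is the average of `log ‖ζ - z‖`
over the circle `‖ζ‖ = r`. By Jensen's formula `A(r) = log (max r ‖z‖)`, and the remaining radial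
integral is elementary: `∫₀^∞ r log (max r a) (1 + r²)⁻² dr = log (1 + a²) / 4`.
Fubini is justified through the identity `|log x| = 2 log⁺ x - log x`, which bounds the circle
averages of `|log ‖ζ - z‖|` by `2 (r + ‖z‖) - log (max r ‖z‖)`.
-/

open MeasureTheory Real Set Filter Topology Asymptotics

section PolarIntegration

variable {E : Type*} [NormedAddCommGroup E]

lemma Complex.polarCoord_symm_eq_circleMap (p : ℝ × ℝ) :
    Complex.polarCoord.symm p = circleMap 0 p.1 p.2 := by
  simp [circleMap, Complex.exp_mul_I]

lemma integral_Ioo_circleMap_eq_circleAverage [NormedSpace ℝ E] (f : ℂ → E) (c : ℂ) (R : ℝ) :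
    ∫ θ in Ioo (-π) π, f (circleMap c R θ) = (2 * π) • circleAverage f c R := by
  have hperiod : (fun θ ↦ f (circleMap c R θ)).Periodic (2 * π) :=
    fun θ ↦ by simp [periodic_circleMap c R θ]
  have hshift := hperiod.intervalIntegral_add_eq (-π) 0
  rw [show -π + 2 * π = π by ring, zero_add] at hshift
  rw [circleAverage, smul_inv_smul₀ two_pi_pos.ne', ← integral_Ioc_eq_integral_Ioo,
    ← intervalIntegral.integral_of_le (by linarith [pi_pos]), hshift]

lemma CircleIntegrable.integrableOn_Ioo {f : ℂ → E} {c : ℂ} {R : ℝ}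
    (hf : CircleIntegrable f c R) :
    IntegrableOn (fun θ ↦ f (circleMap c R θ)) (Ioo (-π) π) := by
  have hperiod : (fun θ ↦ f (circleMap c R θ)).Periodic (2 * π) :=
    fun θ ↦ by simp [periodic_circleMap c R θ]
  have := hperiod.intervalIntegrable₀ two_pi_pos.ne' hf (-π) π
  exact ((intervalIntegrable_iff_integrableOn_Ioc_of_le (by linarith [pi_pos])).1 this).mono_set
    Ioo_subset_Ioc_self

lemma MeasureTheory.StronglyMeasurable.circleAverage [NormedSpace ℝ E] {f : ℂ → E}
    (hf : StronglyMeasurable f) (c : ℂ) : StronglyMeasurable (Real.circleAverage f c) := by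
  have hjoint : StronglyMeasurable (fun p : ℝ × ℝ ↦ f (circleMap c p.1 p.2)) :=
    hf.comp_measurable (by fun_prop : Continuous fun p : ℝ × ℝ ↦ circleMap c p.1 p.2).measurable
  unfold Real.circleAverage
  simp only [intervalIntegral.integral_of_le two_pi_pos.le]
  exact (hjoint.integral_prod_right' (ν := volume.restrict (Ioc 0 (2 * π)))).const_smul _

theorem integral_eq_two_pi_smul_integral_circleAverage [NormedSpace ℝ E] [CompleteSpace E]
    {f : ℂ → E} (hf : StronglyMeasurable f) (hcirc : ∀ r > 0, CircleIntegrable f 0 r)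
    (hnorm : IntegrableOn (fun r ↦ r * circleAverage (‖f ·‖) 0 r) (Ioi 0)) :
    ∫ ζ, f ζ = (2 * π) • ∫ r in Ioi 0, r • circleAverage f 0 r := by
  set F : ℝ × ℝ → E := fun p ↦ p.1 • f (circleMap 0 p.1 p.2)
  have hF : Integrable F ((volume.restrict (Ioi 0)).prod (volume.restrict (Ioo (-π) π))) := by
    have hmeas : StronglyMeasurable F := measurable_fst.stronglyMeasurable.smul
      (hf.comp_measurable (by fun_prop : Continuous fun p : ℝ × ℝ ↦ circleMap 0 p.1 p.2).measurable)
    refine (integrable_prod_iff hmeas.aestronglyMeasurable).2 ⟨?_, ?_⟩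
    · filter_upwards [ae_restrict_mem measurableSet_Ioi] with r hr
      exact (hcirc r hr).integrableOn_Ioo.smul r
    · refine IntegrableOn.congr_fun (hnorm.const_mul (2 * π)) (fun r (hr : 0 < r) ↦ ?_)
        measurableSet_Ioi
      simp only [F, norm_smul, integral_const_mul, integral_Ioo_circleMap_eq_circleAverage
        (fun ζ ↦ ‖f ζ‖), norm_of_nonneg hr.le, smul_eq_mul]
      ring
  rw [← Complex.integral_comp_polarCoord_symm, polarCoord_target]
  simp only [Complex.polarCoord_symm_eq_circleMap]
  rw [Measure.volume_eq_prod, ← Measure.prod_restrict, integral_prod _ hF, ← integral_smul]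
  refine setIntegral_congr_fun measurableSet_Ioi fun r _ ↦ ?_
  simp only [F, integral_smul, integral_Ioo_circleMap_eq_circleAverage, smul_comm r]

end PolarIntegration

lemma circleAverage_radial_mul (w : ℝ → ℝ) (g : ℂ → ℝ) (R : ℝ) :
    circleAverage (fun ζ ↦ w ‖ζ‖ * g ζ) 0 R = w |R| * circleAverage g 0 R := by
  rw [← smul_eq_mul, ← circleAverage_fun_smul]
  exact circleAverage_congr_sphere fun ζ hζ ↦ by simp_all

lemma CircleIntegrable.radial_mul {g : ℂ → ℝ} {R : ℝ} (hg : CircleIntegrable g 0 R) (w : ℝ → ℝ) :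
    CircleIntegrable (fun ζ ↦ w ‖ζ‖ * g ζ) 0 R := by
  simpa [CircleIntegrable, norm_circleMap_zero] using hg.const_mul (w |R|)

lemma circleAverage_log_norm_sub_eq_log_max (z : ℂ) {r : ℝ} (hr : 0 < r) :
    circleAverage (log ‖· - z‖) 0 r = log (max r ‖z‖) := by
  rw [circleAverage_log_norm_sub_const_eq_log_radius_add_posLog hr.ne', zero_sub, norm_neg,
    posLog_apply]
  rcases (norm_nonneg z).eq_or_lt with hz | hz
  · simp [← hz, hr.le]
  rw [log_mul (inv_ne_zero hr.ne') hz.ne', log_inv, ← max_add_add_left, add_zero,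
    add_neg_cancel_left]
  rcases le_total r ‖z‖ with h | h <;> simp [h, log_le_log hr, log_le_log hz]

lemma circleAverage_abs_log_norm_sub_le (z : ℂ) {r : ℝ} (hr : 0 < r) :
    circleAverage (|log ‖· - z‖|) 0 r ≤ 2 * (r + ‖z‖) - log (max r ‖z‖) := by
  have hlog := circleIntegrable_log_norm_sub_const (c := 0) (a := z) r
  calc circleAverage (|log ‖· - z‖|) 0 r
      ≤ circleAverage (fun ζ ↦ 2 * (r + ‖z‖) - log ‖ζ - z‖) 0 r := by
        refine circleAverage_mono hlog.abs ((circleIntegrable_const _ 0 r).sub hlog) fun ζ hζ ↦ ?_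
        rw [mem_sphere_zero_iff_norm, abs_of_pos hr] at hζ
        have hposLog : log⁺ ‖ζ - z‖ ≤ r + ‖z‖ := calc
          log⁺ ‖ζ - z‖ ≤ ‖ζ - z‖ := max_le (norm_nonneg _) (log_le_self (norm_nonneg _))
          _ ≤ r + ‖z‖ := hζ ▸ norm_sub_le ζ z
        linarith [half_mul_log_add_log_abs (x := ‖ζ - z‖)]
    _ = 2 * (r + ‖z‖) - log (max r ‖z‖) := by
        rw [circleAverage_fun_sub (circleIntegrable_const _ 0 r) hlog, circleAverage_const,
          circleAverage_log_norm_sub_eq_log_max z hr]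

lemma abs_mul_log_le_one_add_sq (r : ℝ) : |r * log r| ≤ 1 + r ^ 2 := by
  suffices key : ∀ s, 0 < s → |s * log s| ≤ 1 + s ^ 2 by
    rcases eq_or_ne r 0 with rfl | hr
    · simp
    simpa [abs_mul, log_abs, sq_abs] using key |r| (abs_pos.2 hr)
  intro s hs
  rcases le_total s 1 with h1 | h1
  · have := abs_log_mul_self_lt s hs h1
    rw [mul_comm] at this
    linarith [sq_nonneg s]
  · rw [abs_of_nonneg (mul_nonneg hs.le (log_nonneg h1)), sq]
    nlinarith [log_le_self hs.le]

lemma abs_mul_log_max_le {r : ℝ} (hr : 0 < r) (a : ℝ) :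
    |r * log (max r a)| ≤ (1 + |log a|) * (1 + r ^ 2) := by
  have hmul := abs_mul_log_le_one_add_sq r
  rcases le_total a r with h | h
  · rw [max_eq_left h]
    nlinarith [abs_nonneg (log a), sq_nonneg r]
  · rw [max_eq_right h, abs_mul, abs_of_pos hr]
    nlinarith [abs_nonneg (log a), sq_nonneg (r - 1)]

lemma integrableOn_mul_log_max_div (a : ℝ) :
    IntegrableOn (fun r ↦ r * log (max r a) / (1 + r ^ 2) ^ 2) (Ioi 0) := by
  refine ((integrable_inv_one_add_sq.const_mul (1 + |log a|)).integrableOn).mono'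
    (Measurable.aestronglyMeasurable (by fun_prop))
    ((ae_restrict_iff' measurableSet_Ioi).2 (ae_of_all _ fun r (hr : 0 < r) ↦ ?_))
  have hpos : 0 < 1 + r ^ 2 := by positivity
  rw [norm_div, norm_pow, Real.norm_eq_abs, Real.norm_eq_abs, abs_of_pos hpos,
    div_le_iff₀ (by positivity)]
  calc |r * log (max r a)| ≤ (1 + |log a|) * (1 + r ^ 2) := abs_mul_log_max_le hr a
    _ = (1 + |log a|) * (1 + r ^ 2)⁻¹ * (1 + r ^ 2) ^ 2 := by field_simp

/-- Written with `r * (r * log r)` so that it is continuous at `0`: this gives the case `a = 0`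
of `integral_mul_log_max_div` without a separate limit argument. -/
noncomputable def radialPrimitive (r : ℝ) : ℝ :=
  r * (r * log r) / (2 * (1 + r ^ 2)) - log (1 + r ^ 2) / 4

lemma continuous_radialPrimitive : Continuous radialPrimitive := by
  unfold radialPrimitive
  have : Continuous fun r : ℝ ↦ r * log r := continuous_mul_log
  fun_prop (disch := intros; positivity)

lemma hasDerivAt_radialPrimitive {r : ℝ} (hr : r ≠ 0) :
    HasDerivAt radialPrimitive (r * log r / (1 + r ^ 2) ^ 2) r := by
  have hq : HasDerivAt (fun s : ℝ ↦ 1 + s ^ 2) (2 * r) r := by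
    simpa using (hasDerivAt_pow 2 r).const_add 1
  have hpos : 0 < 1 + r ^ 2 := by positivity
  have := (((hasDerivAt_id' r).mul ((hasDerivAt_id' r).mul (hasDerivAt_log hr))).div
    (hq.const_mul 2) (by positivity)).sub ((hq.log hpos.ne').div_const 4)
  refine this.congr_deriv ?_
  simp only [Pi.mul_apply]
  field_simp
  ring_nf

lemma tendsto_radialPrimitive_atTop : Tendsto radialPrimitive atTop (𝓝 0) := by
  have hlog : Tendsto (fun r : ℝ ↦ log r / (1 + r ^ 2)) atTop (𝓝 0) := by
    refine (isLittleO_log_id_atTop.trans_isBigO ?_).tendsto_div_nhds_zero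
    refine IsBigO.of_bound 1 (Eventually.of_forall fun r ↦ ?_)
    rw [one_mul, id, Real.norm_eq_abs, Real.norm_eq_abs,
      abs_of_pos (by positivity : 0 < 1 + r ^ 2)]
    nlinarith [abs_nonneg r, sq_abs r, sq_nonneg (|r| - 1)]
  have hinv : Tendsto (fun r : ℝ ↦ log (1 + (r ^ 2)⁻¹)) atTop (𝓝 0) := by
    have := ((tendsto_pow_atTop two_ne_zero).inv_tendsto_atTop.const_add 1).log (by norm_num)
    simpa using this
  have := (hinv.div_const 4).neg.sub (hlog.div_const 2)
  norm_num at this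
  refine this.congr' ?_
  filter_upwards [eventually_gt_atTop 0] with r hr
  rw [radialPrimitive, ← one_div, one_add_div (by positivity),
    log_div (by positivity) (by positivity), log_pow]
  field_simp
  ring_nf

lemma integral_div_one_add_sq_sq (a : ℝ) :
    ∫ r in (0 : ℝ)..a, r / (1 + r ^ 2) ^ 2 = a ^ 2 / (2 * (1 + a ^ 2)) := by
  have hderiv : ∀ r ∈ uIcc (0 : ℝ) a,
      HasDerivAt (fun s : ℝ ↦ -(2 * (1 + s ^ 2))⁻¹) (r / (1 + r ^ 2) ^ 2) r := by
    intro r _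
    have hq : HasDerivAt (fun s : ℝ ↦ 2 * (1 + s ^ 2)) (2 * (2 * r)) r := by
      simpa using ((hasDerivAt_pow 2 r).const_add 1).const_mul 2
    refine (hq.inv (by positivity)).neg.congr_deriv ?_
    field_simp
  rw [intervalIntegral.integral_eq_sub_of_hasDerivAt hderiv
    (Continuous.intervalIntegrable (by fun_prop (disch := intros; positivity)) 0 a)]
  field_simp
  ring

lemma integral_mul_log_max_div (a : ℝ) (ha : 0 ≤ a) :
    ∫ r in Ioi 0, r * log (max r a) / (1 + r ^ 2) ^ 2 = log (1 + a ^ 2) / 4 := by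
  have hint := integrableOn_mul_log_max_div a
  have hinner : ∫ r in Ioc 0 a, r * log (max r a) / (1 + r ^ 2) ^ 2
      = log a * (a ^ 2 / (2 * (1 + a ^ 2))) := by
    rw [← integral_div_one_add_sq_sq, intervalIntegral.integral_of_le ha,
      ← integral_const_mul]
    refine setIntegral_congr_fun measurableSet_Ioc fun r hr ↦ ?_
    rw [max_eq_right hr.2]
    ring
  have houter : ∫ r in Ioi a, r * log (max r a) / (1 + r ^ 2) ^ 2 = -radialPrimitive a := by
    have heq : EqOn (fun r ↦ r * log (max r a) / (1 + r ^ 2) ^ 2)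
        (fun r ↦ r * log r / (1 + r ^ 2) ^ 2) (Ioi a) :=
      fun r (hr : a < r) ↦ by simp only [max_eq_left hr.le]
    rw [setIntegral_congr_fun measurableSet_Ioi heq, integral_Ioi_of_hasDerivAt_of_tendsto
      continuous_radialPrimitive.continuousWithinAt
      (fun r (hr : a < r) ↦ hasDerivAt_radialPrimitive (ha.trans_lt hr).ne')
      ((hint.mono_set (Ioi_subset_Ioi ha)).congr_fun heq measurableSet_Ioi)
      tendsto_radialPrimitive_atTop, zero_sub]
  rw [← Ioc_union_Ioi_eq_Ioi ha, setIntegral_union (Ioc_disjoint_Ioi le_rfl) measurableSet_Ioi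
    (hint.mono_set Ioc_subset_Ioi_self) (hint.mono_set (Ioi_subset_Ioi ha)), hinner, houter,
    radialPrimitive]
  field_simp
  ring

lemma integrableOn_mul_circleAverage_norm_log (z : ℂ) :
    IntegrableOn (fun r ↦ r * circleAverage (fun ζ ↦ ‖2 / (1 + ‖ζ‖ ^ 2) ^ 2 * log ‖ζ - z‖‖) 0 r)
      (Ioi 0) := by
  have hnorm : (fun ζ ↦ ‖2 / (1 + ‖ζ‖ ^ 2) ^ 2 * log ‖ζ - z‖‖)
      = fun ζ ↦ (fun r ↦ 2 / (1 + r ^ 2) ^ 2) ‖ζ‖ * |log ‖ζ - z‖| := by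
    ext ζ
    rw [norm_mul, Real.norm_eq_abs, abs_of_pos (by positivity), Real.norm_eq_abs]
  have hmeas : StronglyMeasurable
      (circleAverage (fun ζ ↦ ‖2 / (1 + ‖ζ‖ ^ 2) ^ 2 * log ‖ζ - z‖‖) 0) :=
    StronglyMeasurable.circleAverage (by fun_prop) 0
  refine ((integrable_inv_one_add_sq.const_mul
    (2 * (3 + 2 * ‖z‖ + |log ‖z‖|))).integrableOn).mono'
    (measurable_id.stronglyMeasurable.mul hmeas).aestronglyMeasurable
    ((ae_restrict_iff' measurableSet_Ioi).2 (ae_of_all _ fun r (hr : 0 < r) ↦ ?_))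
  have hpos : 0 < 1 + r ^ 2 := by positivity
  have hbound := circleAverage_abs_log_norm_sub_le z hr
  have hlog := abs_mul_log_max_le hr ‖z‖
  have hnonneg : 0 ≤ circleAverage (|log ‖· - z‖|) 0 r :=
    circleAverage_nonneg_of_nonneg fun ζ _ ↦ abs_nonneg _
  have havg : circleAverage (fun ζ ↦ ‖2 / (1 + ‖ζ‖ ^ 2) ^ 2 * log ‖ζ - z‖‖) 0 r
      = 2 / (1 + r ^ 2) ^ 2 * circleAverage (|log ‖· - z‖|) 0 r := by
    rw [hnorm, circleAverage_radial_mul (fun r ↦ 2 / (1 + r ^ 2) ^ 2) (|log ‖· - z‖|),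
      abs_of_pos hr]
  have hA : r * circleAverage (|log ‖· - z‖|) 0 r
      ≤ 2 * (r * (r + ‖z‖)) - r * log (max r ‖z‖) := by
    nlinarith [mul_le_mul_of_nonneg_left hbound hr.le]
  have hsq : r * (r + ‖z‖) ≤ (1 + ‖z‖) * (1 + r ^ 2) := by
    nlinarith [sq_nonneg (r - 1), norm_nonneg z, mul_nonneg (norm_nonneg z) (sq_nonneg (r - 1))]
  rw [havg, norm_of_nonneg (by positivity), ← div_eq_mul_inv, le_div_iff₀ hpos]
  calc r * (2 / (1 + r ^ 2) ^ 2 * circleAverage (|log ‖· - z‖|) 0 r) * (1 + r ^ 2)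
      = 2 * (r * circleAverage (|log ‖· - z‖|) 0 r) / (1 + r ^ 2) := by field_simp
    _ ≤ 2 * (3 + 2 * ‖z‖ + |log ‖z‖|) := by
      rw [div_le_iff₀ hpos]
      nlinarith [neg_le_of_abs_le hlog]

/-- For every `z ∈ ℂ`,
`(1/π) ∫_ℂ log |z - ζ|² / (1 + |ζ|²)² dA(ζ) = log (1 + |z|²)`,
where `dA` is Lebesgue measure on `ℂ`. -/
theorem fubini_study_log_potential_identity (z : ℂ) :
    (1 / π) * ∫ ζ : ℂ, Real.log (‖z - ζ‖ ^ 2) / (1 + ‖ζ‖ ^ 2) ^ 2 ∂volume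
      = Real.log (1 + ‖z‖ ^ 2) := by
  set w : ℝ → ℝ := fun r ↦ 2 / (1 + r ^ 2) ^ 2
  have hintegrand : (fun ζ : ℂ ↦ log (‖z - ζ‖ ^ 2) / (1 + ‖ζ‖ ^ 2) ^ 2)
      = fun ζ ↦ w ‖ζ‖ * log ‖ζ - z‖ := by
    ext ζ
    rw [log_pow, norm_sub_rev]
    ring
  have hradial : ∫ r in Ioi 0, r • circleAverage (fun ζ ↦ w ‖ζ‖ * log ‖ζ - z‖) 0 r
      = 2 * ∫ r in Ioi 0, r * log (max r ‖z‖) / (1 + r ^ 2) ^ 2 := by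
    rw [← integral_const_mul]
    refine setIntegral_congr_fun measurableSet_Ioi fun r (hr : 0 < r) ↦ ?_
    rw [circleAverage_radial_mul, circleAverage_log_norm_sub_eq_log_max z hr, abs_of_pos hr,
      smul_eq_mul]
    ring
  rw [hintegrand, integral_eq_two_pi_smul_integral_circleAverage (by fun_prop)
    (fun r _ ↦ (circleIntegrable_log_norm_sub_const r).radial_mul w)
    (integrableOn_mul_circleAverage_norm_log z), smul_eq_mul, hradial,
    integral_mul_log_max_div _ (norm_nonneg z)]
  field_simp
  ring
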